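/- Let N = (V, A, c) be a network, y, z ∈ V distinct and m ∈ ℕ₀. Then (i) the set S^{N,m}_{yz} of sequences of m arc-disjoint paths from y to z in N equals the union, over all flows f from y to z in N of value m, of the sets S^N_{yz}(f) of path-sequences appearing in some decomposition of f; and (ii) the set M^N_{yz} of maximum-length sequences of arc-disjoint paths from y to z equals the union of S^N_{yz}(f) over all maximum flows f from y to z in N. -/

import Mathlib

/-!
Networks on the complete digraph: capacities `c : V → V → ℕ` with no loops
(arcs are ordered pairs of distinct vertices; loops are given capacity 0).
-/

structure Network (V : Type*) where
  c : V → V → ℕ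
  no_loop : ∀ v, c v v = 0

namespace NetFlow

variable {V : Type*} [Fintype V] [DecidableEq V]

/-- `f` is a flow from `y` to `z` in `N`. -/
def IsFlow (N : Network V) (y z : V) (f : V → V → ℕ) : Prop :=
  (∀ u v, f u v ≤ N.c u v) ∧
  (∀ x, x ≠ y → x ≠ z → ∑ u, f u x = ∑ u, f x u)

/-- The value of a flow from `y`. -/
def flowValue (f : V → V → ℕ) (y : V) : ℤ :=
  (∑ u, (f y u : ℤ)) - ∑ u, (f u y : ℤ)

/-- The maximum flow value `φ^N_{yz}`. -/
noncomputable def maxFlowValue (N : Network V) (y z : V) : ℕ :=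
  sSup {m : ℕ | ∃ f, IsFlow N y z f ∧ flowValue f y = (m : ℤ)}

/-- `f` is a maximum flow from `y` to `z` in `N`. -/
def IsMaxFlow (N : Network V) (y z : V) (f : V → V → ℕ) : Prop :=
  IsFlow N y z f ∧ flowValue f y = (maxFlowValue N y z : ℤ)

/-- The network `N_X`: capacities of arcs incident to `X` are set to zero. -/
def removeVerts (N : Network V) (X : Finset V) : Network V where
  c u v := if u ∈ X ∨ v ∈ X then 0 else N.c u v
  no_loop v := by simp [N.no_loop v]

/-- `φ^N_{yz}(X) = φ^N_{yz} - φ^{N_X}_{yz}`. -/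
noncomputable def phiDrop (N : Network V) (y z : V) (X : Finset V) : ℤ :=
  (maxFlowValue N y z : ℤ) - (maxFlowValue (removeVerts N X) y z : ℤ)

/-- The (consecutive) arcs of a list of vertices. -/
def pathArcs (p : List V) : List (V × V) := p.zip p.tail

/-- `p` is a path from `y` to `z` in `N`: at least two distinct vertices, starting at `y`,
ending at `z`, with all consecutive arcs of positive capacity. -/
def IsPath (N : Network V) (y z : V) (p : List V) : Prop :=
  2 ≤ p.length ∧ p.Nodup ∧ p.head? = some y ∧ p.getLast? = some z ∧
    p.Chain' fun u v => 1 ≤ N.c u v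

/-- `p` is a cycle in `N`. -/
def IsCycle (N : Network V) (p : List V) : Prop :=
  3 ≤ p.length ∧ p.dropLast.Nodup ∧ p.head? = p.getLast? ∧
    p.Chain' fun u v => 1 ≤ N.c u v

/-- A sequence of arc-disjoint paths from `y` to `z` in `N`: each component is a path, and
each arc `a` is used by at most `c a` components. -/
def IsPathSeq (N : Network V) (y z : V) (γ : List (List V)) : Prop :=
  (∀ p ∈ γ, IsPath N y z p) ∧
  ∀ u v : V, γ.countP (fun p => decide ((u, v) ∈ pathArcs p)) ≤ N.c u v

/-- `λ^N_{yz}`: the maximum length of a sequence of arc-disjoint paths from `y` to `z`. -/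
noncomputable def maxSeqLen (N : Network V) (y z : V) : ℕ :=
  sSup {m : ℕ | ∃ γ : List (List V), IsPathSeq N y z γ ∧ γ.length = m}

/-- `M^N_{yz}`: the sequences of arc-disjoint paths from `y` to `z` of maximum length. -/
def MaxSeqs (N : Network V) (y z : V) : Set (List (List V)) :=
  {γ | IsPathSeq N y z γ ∧ γ.length = maxSeqLen N y z}

/-- `l_X(γ)`: the number of components of `γ` having a vertex in `X`. -/
def lX (X : Finset V) (γ : List (List V)) : ℕ :=
  γ.countP fun p => p.any fun x => decide (x ∈ X)

/-- `λ^N_{yz}(X)`: the minimum of `l_X` over maximum-length sequences of arc-disjoint paths. -/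
noncomputable def lambdaX (N : Network V) (y z : V) (X : Finset V) : ℕ :=
  sInf {n : ℕ | ∃ γ ∈ MaxSeqs N y z, lX X γ = n}

/-- The flow through a vertex: `f(x) = Σ_{a exiting x} f(a)` if `x ∉ {y,z}`, `v(f)` otherwise. -/
def vertexFlow (f : V → V → ℕ) (y z x : V) : ℤ :=
  if x = y ∨ x = z then flowValue f y else ∑ u, (f x u : ℤ)

/-- `δ^N_{yz}(X)`: the minimum of `f(X) = Σ_{x∈X} f(x)` over maximum flows `f`. -/
noncomputable def deltaX (N : Network V) (y z : V) (X : Finset V) : ℕ :=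
  sInf {n : ℕ | ∃ f, IsMaxFlow N y z f ∧ (∑ x ∈ X, vertexFlow f y z x) = (n : ℤ)}

/-- The flow `f_γ` associated with a sequence of arc-disjoint paths. -/
def seqFlow (γ : List (List V)) (u v : V) : ℕ :=
  γ.countP fun p => decide ((u, v) ∈ pathArcs p)

/-- The path (or cycle) function `χ_p` of a path or cycle `p`. -/
def chi (p : List V) (u v : V) : ℕ := (pathArcs p).count (u, v)

/-- `(γ, w)` is a decomposition of the flow `f`: `γ` is a sequence of `v(f)` paths from `y`
to `z`, `w` a sequence of cycles, and `f = Σ_j χ_{γ_j} + Σ_j χ_{w_j}`. -/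
def IsDecomposition (N : Network V) (y z : V) (f : V → V → ℕ)
    (γ w : List (List V)) : Prop :=
  (∀ p ∈ γ, IsPath N y z p) ∧ (∀ q ∈ w, IsCycle N q) ∧
  (γ.length : ℤ) = flowValue f y ∧
  ∀ u v : V, f u v = (γ.map fun p => chi p u v).sum + (w.map fun q => chi q u v).sum

/-- The forward arcs of a generalized path given by vertices `p` and directions `d`. -/
def forwardArcs (p : List V) (d : List Bool) : List (V × V) :=
  ((p.zip p.tail).zip d).filterMap fun e => if e.2 then some e.1 else none

/-- The backward arcs of a generalized path given by vertices `p` and directions `d`. -/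
def backwardArcs (p : List V) (d : List Bool) : List (V × V) :=
  ((p.zip p.tail).zip d).filterMap fun e => if e.2 then none else some (e.1.2, e.1.1)

/-- `(p, d)` is a generalized path from `y` to `z`: distinct vertices `x_1 = y, …, x_m = z`
(`m ≥ 2`), the `i`-th arc being `(x_i, x_{i+1})` (forward, `d_i = true`) or `(x_{i+1}, x_i)`
(backward, `d_i = false`). -/
def IsGenPath (y z : V) (p : List V) (d : List Bool) : Prop :=
  2 ≤ p.length ∧ p.Nodup ∧ p.head? = some y ∧ p.getLast? = some z ∧
    d.length + 1 = p.length

/-- `(p, d)` is an augmenting path for `f` from `y` to `z` in `N`. -/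
def IsAugPath (N : Network V) (y z : V) (f : V → V → ℕ)
    (p : List V) (d : List Bool) : Prop :=
  IsGenPath y z p d ∧
  (∀ a ∈ forwardArcs p d, f a.1 a.2 < N.c a.1 a.2) ∧
  (∀ a ∈ backwardArcs p d, 1 ≤ f a.1 a.2)

/-- `χ_σ` for a generalized path `σ = (p, d)`: `+1` on forward arcs, `-1` on backward arcs. -/
def chiGen (p : List V) (d : List Bool) (u v : V) : ℤ :=
  ((forwardArcs p d).count (u, v) : ℤ) - ((backwardArcs p d).count (u, v) : ℤ)

/-- The full flow vitality group centrality measure `φ^N(X)`. -/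
noncomputable def phiGC (N : Network V) (X : Finset V) : ℝ :=
  ∑ a ∈ Finset.univ.filter (fun a : V × V => a.1 ≠ a.2 ∧ 0 < maxFlowValue N a.1 a.2),
    (phiDrop N a.1 a.2 X : ℝ) / (maxFlowValue N a.1 a.2 : ℝ)

/-- The full flow betweenness group centrality measure `λ^N(X)`. -/
noncomputable def lambdaGC (N : Network V) (X : Finset V) : ℝ :=
  ∑ a ∈ Finset.univ.filter (fun a : V × V => a.1 ≠ a.2 ∧ 0 < maxFlowValue N a.1 a.2),
    (lambdaX N a.1 a.2 X : ℝ) / (maxFlowValue N a.1 a.2 : ℝ)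

end NetFlow

/-!
The path function of a path from `y` to `z` has net outflow `1` at `y`, `-1` at `z` and `0`
elsewhere, so a sequence `γ` of arc-disjoint paths yields the flow `f_γ = Σ_j χ_{γ_j}` of value
`|γ|`, decomposed by `(γ, [])`; conversely the paths of a decomposition of `f` use each arc at
most `f a ≤ c a` times. For (ii) it remains to see that `λ_{yz} = φ_{yz}`: a flow of positive
value has a path from `y` to `z` along arcs of positive flow, and removing it leaves a flow of
value one less, so a flow of value `m` contains `m` arc-disjoint paths.
-/

namespace NetFlow

section Arcs

variable {V : Type*}

lemma pathArcs_cons_cons (a b : V) (l : List V) :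
    pathArcs (a :: b :: l) = (a, b) :: pathArcs (b :: l) := rfl

lemma map_fst_pathArcs (p : List V) : (pathArcs p).map Prod.fst = p.dropLast := by
  induction p with
  | nil => rfl
  | cons a l ih =>
    cases l with
    | nil => rfl
    | cons b l => rw [pathArcs_cons_cons, List.map_cons, ih, List.dropLast_cons_cons]

lemma map_snd_pathArcs (p : List V) : (pathArcs p).map Prod.snd = p.tail :=
  List.map_snd_zip (by simp)

lemma nodup_pathArcs {p : List V} (hp : p.Nodup) : (pathArcs p).Nodup :=
  .of_map Prod.fst (map_fst_pathArcs p ▸ hp.sublist p.dropLast_sublist)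

lemma rel_of_mem_pathArcs {r : V → V → Prop} {p : List V} (hp : p.IsChain r) {u v : V}
    (h : (u, v) ∈ pathArcs p) : r u v := by
  induction p with
  | nil => simp [pathArcs] at h
  | cons a l ih =>
    cases l with
    | nil => simp [pathArcs] at h
    | cons b l =>
      rw [pathArcs_cons_cons, List.mem_cons, Prod.mk.injEq] at h
      rw [List.isChain_cons_cons] at hp
      rcases h with ⟨rfl, rfl⟩ | h
      exacts [hp.1, ih hp.2 h]

lemma exists_nodup_isChain_of_reflTransGen {r : V → V → Prop} {a b : V}
    (h : Relation.ReflTransGen r a b) :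
    ∃ p : List V, p.Nodup ∧ p.head? = some a ∧ p.getLast? = some b ∧ p.IsChain r := by
  induction h using Relation.ReflTransGen.head_induction_on with
  | refl => exact ⟨[b], List.nodup_singleton b, rfl, rfl, .singleton b⟩
  | @head a c hac _ ih =>
    obtain ⟨p, hnd, hc, hb, hr⟩ := ih
    by_cases ha : a ∈ p
    · -- cut off the loop through `a`
      obtain ⟨s, t, rfl⟩ := List.append_of_mem ha
      refine ⟨a :: t, hnd.sublist (List.sublist_append_right s _), rfl, ?_,
        hr.suffix (List.suffix_append s _)⟩
      rwa [List.getLast?_append_of_ne_nil s (List.cons_ne_nil a t)] at hb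
    · refine ⟨a :: p, List.nodup_cons.2 ⟨ha, hnd⟩, rfl, ?_, hr.cons (by simpa [hc])⟩
      obtain ⟨q, rfl⟩ := List.head?_eq_some_iff.1 hc
      rwa [List.getLast?_cons_cons]

end Arcs

section Counts

variable {V : Type*} [DecidableEq V]

lemma chi_eq_ite {p : List V} (hp : p.Nodup) (u v : V) :
    chi p u v = if (u, v) ∈ pathArcs p then 1 else 0 :=
  (nodup_pathArcs hp).count

lemma seqFlow_cons (p : List V) (γ : List (List V)) (u v : V) :
    seqFlow (p :: γ) u v = seqFlow γ u v + if (u, v) ∈ pathArcs p then 1 else 0 := by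
  simp [seqFlow, List.countP_cons]

lemma seqFlow_le_sum_chi (γ : List (List V)) (u v : V) :
    seqFlow γ u v ≤ (γ.map fun p => chi p u v).sum := by
  induction γ with
  | nil => rfl
  | cons p γ ih =>
    rw [seqFlow_cons, List.map_cons, List.sum_cons, add_comm (chi p u v)]
    refine add_le_add ih ?_
    split_ifs with h
    exacts [List.count_pos_iff.2 h, Nat.zero_le _]

lemma seqFlow_eq_sum_chi {γ : List (List V)} (hγ : ∀ p ∈ γ, p.Nodup) (u v : V) :
    seqFlow γ u v = (γ.map fun p => chi p u v).sum := by
  induction γ with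
  | nil => rfl
  | cons p γ ih =>
    rw [seqFlow_cons, List.map_cons, List.sum_cons, add_comm (chi p u v),
      ih fun q hq => hγ q (List.mem_cons_of_mem p hq), chi_eq_ite (hγ p List.mem_cons_self)]

/-- Counting `x` in `p = y :: p.tail = p.dropLast ++ [z]` in two ways. -/
lemma count_dropLast_sub_count_tail {p : List V} {y z : V} (hy : p.head? = some y)
    (hz : p.getLast? = some z) (x : V) :
    (p.dropLast.count x : ℤ) - p.tail.count x =
      (if x = y then 1 else 0) - (if x = z then 1 else 0) := by
  have hcons := congrArg (List.count x) (List.eq_cons_of_mem_head? hy)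
  have hconcat := congrArg (List.count x) (List.dropLast_append_getLast? z hz)
  simp only [List.count_cons, List.count_append, List.count_nil, beq_iff_eq] at hcons hconcat
  simp only [eq_comm (a := x)]
  split_ifs at * <;> omega

lemma sum_count_left [Fintype V] (l : List (V × V)) (x : V) :
    ∑ u, l.count (x, u) = (l.map Prod.fst).count x := by
  induction l with
  | nil => simp
  | cons a l ih =>
    simp only [List.count_cons, Finset.sum_add_distrib, ih, List.map_cons, beq_iff_eq]
    obtain ⟨a, b⟩ := a
    rcases eq_or_ne a x with rfl | h <;> simp [*]

lemma sum_count_right [Fintype V] (l : List (V × V)) (x : V) :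
    ∑ u, l.count (u, x) = (l.map Prod.snd).count x := by
  induction l with
  | nil => simp
  | cons a l ih =>
    simp only [List.count_cons, Finset.sum_add_distrib, ih, List.map_cons, beq_iff_eq]
    obtain ⟨a, b⟩ := a
    rcases eq_or_ne b x with rfl | h <;> simp [*]

end Counts

section FlowValue

variable {V : Type*} [Fintype V]

lemma flowValue_add (f g : V → V → ℕ) (x : V) :
    flowValue (f + g) x = flowValue f x + flowValue g x := by
  simp only [flowValue, Pi.add_apply, Nat.cast_add, Finset.sum_add_distrib]
  ring

lemma flowValue_sub {f g : V → V → ℕ} (hgf : g ≤ f) (x : V) :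
    flowValue (f - g) x = flowValue f x - flowValue g x := by
  have := flowValue_add (f - g) g x
  rw [tsub_add_cancel_of_le hgf] at this
  linarith

lemma flowValue_sum_map {ι : Type*} (l : List ι) (g : ι → V → V → ℕ) (x : V) :
    flowValue (fun u v => (l.map fun i => g i u v).sum) x =
      (l.map fun i => flowValue (g i) x).sum := by
  induction l with
  | nil => simp [flowValue]
  | cons i l ih =>
    simp only [List.map_cons, List.sum_cons]
    rw [← ih]
    exact flowValue_add (g i) _ x

lemma flowValue_eq_zero_iff (f : V → V → ℕ) (x : V) :
    flowValue f x = 0 ↔ ∑ u, f u x = ∑ u, f x u := by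
  rw [flowValue, sub_eq_zero, eq_comm]
  exact_mod_cast Iff.rfl

lemma isFlow_iff (N : Network V) (y z : V) (f : V → V → ℕ) :
    IsFlow N y z f ↔ f ≤ N.c ∧ ∀ x, x ≠ y → x ≠ z → flowValue f x = 0 := by
  simp only [IsFlow, flowValue_eq_zero_iff]
  rfl

lemma sum_flowValue_eq_cut [DecidableEq V] (f : V → V → ℕ) (S : Finset V) :
    ∑ x ∈ S, flowValue f x =
      ∑ x ∈ S, ∑ u ∈ Sᶜ, (f x u : ℤ) - ∑ x ∈ S, ∑ u ∈ Sᶜ, (f u x : ℤ) := by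
  simp_rw [flowValue, Finset.sum_sub_distrib, ← Finset.sum_add_sum_compl S,
    Finset.sum_add_distrib]
  rw [Finset.sum_comm (s := S) (t := S)]
  ring

end FlowValue

section Flows

variable {V : Type*} [Fintype V] [DecidableEq V] {N : Network V} {y z : V}

lemma flowValue_chi {p : List V} (hy : p.head? = some y) (hz : p.getLast? = some z) (x : V) :
    flowValue (chi p) x = (if x = y then 1 else 0) - (if x = z then 1 else 0) := by
  have hout : ∑ u, chi p x u = p.dropLast.count x := by
    rw [← map_fst_pathArcs]; exact sum_count_left _ x
  have hin : ∑ u, chi p u x = p.tail.count x := by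
    rw [← map_snd_pathArcs]; exact sum_count_right _ x
  rw [flowValue, ← Nat.cast_sum, ← Nat.cast_sum, hout, hin]
  exact count_dropLast_sub_count_tail hy hz x

lemma flowValue_seqFlow {γ : List (List V)} (hγ : ∀ p ∈ γ, IsPath N y z p) (x : V) :
    flowValue (seqFlow γ) x =
      γ.length * ((if x = y then 1 else 0) - (if x = z then 1 else 0)) := by
  have hsum : seqFlow γ = fun u v => (γ.map fun p => chi p u v).sum :=
    funext₂ (seqFlow_eq_sum_chi fun p hp => (hγ p hp).2.1)
  rw [hsum, flowValue_sum_map,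
    List.map_congr_left fun p hp => flowValue_chi (hγ p hp).2.2.1 (hγ p hp).2.2.2.1 x]
  simp [List.map_const']

lemma flowValue_seqFlow_self (hyz : y ≠ z) {γ : List (List V)}
    (hγ : ∀ p ∈ γ, IsPath N y z p) :
    flowValue (seqFlow γ) y = γ.length := by
  simp [flowValue_seqFlow hγ, hyz]

lemma IsPathSeq.isFlow {γ : List (List V)} (hγ : IsPathSeq N y z γ) :
    IsFlow N y z (seqFlow γ) :=
  (isFlow_iff N y z _).2 ⟨hγ.2, fun x hxy hxz => by simp [flowValue_seqFlow hγ.1, hxy, hxz]⟩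

lemma IsPathSeq.isDecomposition (hyz : y ≠ z) {γ : List (List V)} (hγ : IsPathSeq N y z γ) :
    IsDecomposition N y z (seqFlow γ) γ [] :=
  ⟨hγ.1, by simp, (flowValue_seqFlow_self hyz hγ.1).symm,
    fun u v => by simp [seqFlow_eq_sum_chi (fun p hp => (hγ.1 p hp).2.1)]⟩

lemma IsDecomposition.isPathSeq {f : V → V → ℕ} {γ w : List (List V)} (hf : f ≤ N.c)
    (hd : IsDecomposition N y z f γ w) : IsPathSeq N y z γ :=
  ⟨hd.1, fun u v => calc
    seqFlow γ u v ≤ (γ.map fun p => chi p u v).sum := seqFlow_le_sum_chi γ u v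
    _ ≤ f u v := by rw [hd.2.2.2 u v]; exact Nat.le_add_right _ _
    _ ≤ N.c u v := hf u v⟩

theorem isPathSeq_length_iff_exists_decomposition (hyz : y ≠ z) (m : ℕ) (γ : List (List V)) :
    (IsPathSeq N y z γ ∧ γ.length = m) ↔
      ∃ f, IsFlow N y z f ∧ flowValue f y = m ∧ ∃ w, IsDecomposition N y z f γ w := by
  constructor
  · rintro ⟨hγ, rfl⟩
    exact ⟨seqFlow γ, hγ.isFlow, flowValue_seqFlow_self hyz hγ.1, [],
      hγ.isDecomposition hyz⟩
  · rintro ⟨f, hf, hm, w, hd⟩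
    exact ⟨hd.isPathSeq hf.1, by exact_mod_cast hd.2.2.1.trans hm⟩

end Flows

section Decomposition

variable {V : Type*} [Fintype V] [DecidableEq V] {N : Network V} {y z : V}

/-- Otherwise the vertices reachable from `y` along arcs of positive flow form a set containing
`y` but not `z` that no flow leaves, so its net outflow `flowValue f y` is not positive. -/
lemma reflTransGen_of_flowValue_pos {f : V → V → ℕ} (hf : IsFlow N y z f)
    (hv : 0 < flowValue f y) : Relation.ReflTransGen (fun u v => 0 < f u v) y z := by
  classical
  by_contra hz
  set S := Finset.univ.filter (Relation.ReflTransGen (fun u v => 0 < f u v) y)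
  have hclosed : ∀ x ∈ S, ∀ u ∈ Sᶜ, f x u = 0 := by
    intro x hx u hu
    by_contra hxu
    simp only [S, Finset.mem_compl, Finset.mem_filter, Finset.mem_univ, true_and] at hx hu
    exact hu (hx.tail (Nat.pos_of_ne_zero hxu))
  have hsum : ∑ x ∈ S, flowValue f x = flowValue f y :=
    Finset.sum_eq_single_of_mem y (by simp [S, Relation.ReflTransGen.refl]) fun x hx hxy =>
      ((isFlow_iff N y z f).1 hf).2 x hxy (by rintro rfl; simp [S] at hx; exact hz hx)
  have hcut : ∑ x ∈ S, flowValue f x ≤ 0 := by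
    rw [sum_flowValue_eq_cut, Finset.sum_eq_zero fun x hx =>
      Finset.sum_eq_zero fun u hu => by simp [hclosed x hx u hu], zero_sub, neg_nonpos]
    positivity
  linarith

lemma exists_path_of_flowValue_pos (hyz : y ≠ z) {f : V → V → ℕ} (hf : IsFlow N y z f)
    (hv : 0 < flowValue f y) : ∃ p, IsPath N y z p ∧ chi p ≤ f := by
  obtain ⟨p, hnd, hy, hz, hc⟩ :=
    exists_nodup_isChain_of_reflTransGen (reflTransGen_of_flowValue_pos hf hv)
  have hlen : 2 ≤ p.length := by
    match p, hy, hz with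
    | a :: b :: l, _, _ => simp
    | [a], hy, hz =>
      simp only [List.head?_cons, List.getLast?_singleton, Option.some_inj] at hy hz
      exact absurd (hy.symm.trans hz) hyz
  refine ⟨p, ⟨hlen, hnd, hy, hz, hc.imp fun u v h => h.trans_le (hf.1 u v)⟩, fun u v => ?_⟩
  rw [chi_eq_ite hnd]
  split_ifs with h
  exacts [rel_of_mem_pathArcs hc h, Nat.zero_le _]

lemma exists_paths_of_isFlow (hyz : y ≠ z) {f : V → V → ℕ} (hf : IsFlow N y z f) {m : ℕ}
    (hm : flowValue f y = m) :
    ∃ γ : List (List V),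
      (∀ p ∈ γ, IsPath N y z p) ∧ γ.length = m ∧ seqFlow γ ≤ f := by
  induction m generalizing f with
  | zero => exact ⟨[], by simp, rfl, fun u v => Nat.zero_le _⟩
  | succ m ih =>
    obtain ⟨p, hp, hpf⟩ := exists_path_of_flowValue_pos hyz hf (by omega)
    have hval : ∀ x, flowValue (f - chi p) x =
        flowValue f x - ((if x = y then 1 else 0) - (if x = z then 1 else 0)) := fun x => by
      rw [flowValue_sub hpf, flowValue_chi hp.2.2.1 hp.2.2.2.1]
    have hf' : IsFlow N y z (f - chi p) := by
      refine (isFlow_iff N y z _).2 ⟨fun u v => (Nat.sub_le _ _).trans (hf.1 u v), ?_⟩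
      intro x hxy hxz
      simp [hval, hxy, hxz, ((isFlow_iff N y z f).1 hf).2 x hxy hxz]
    obtain ⟨γ, hγ, hlen, hγf⟩ := ih hf' (by simp [hval, hyz, hm])
    refine ⟨p :: γ, List.forall_mem_cons.2 ⟨hp, hγ⟩, by simp [hlen], fun u v => ?_⟩
    rw [seqFlow_cons, ← chi_eq_ite hp.2.1]
    exact Nat.add_le_of_le_sub (hpf u v) (hγf u v)

theorem pathSeqLengths_eq_flowValues (hyz : y ≠ z) :
    {m : ℕ | ∃ γ : List (List V), IsPathSeq N y z γ ∧ γ.length = m} =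
      {m : ℕ | ∃ f, IsFlow N y z f ∧ flowValue f y = m} := by
  ext m
  constructor
  · rintro ⟨γ, hγ, rfl⟩
    exact ⟨seqFlow γ, hγ.isFlow, flowValue_seqFlow_self hyz hγ.1⟩
  · rintro ⟨f, hf, hm⟩
    obtain ⟨γ, hγ, hlen, hγf⟩ := exists_paths_of_isFlow hyz hf hm
    exact ⟨γ, ⟨hγ, fun u v => (hγf u v).trans (hf.1 u v)⟩, hlen⟩

theorem maxSeqLen_eq_maxFlowValue (hyz : y ≠ z) : maxSeqLen N y z = maxFlowValue N y z := by
  rw [maxSeqLen, maxFlowValue, pathSeqLengths_eq_flowValues hyz]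

end Decomposition

end NetFlow

theorem pathSeq_iff_decomposition_general {V : Type*} [Fintype V] [DecidableEq V]
    (N : Network V) (y z : V) (hyz : y ≠ z) (m : ℕ) :
    (∀ γ : List (List V),
      (NetFlow.IsPathSeq N y z γ ∧ γ.length = m) ↔
        ∃ f : V → V → ℕ, NetFlow.IsFlow N y z f ∧ NetFlow.flowValue f y = (m : ℤ) ∧
          ∃ w : List (List V), NetFlow.IsDecomposition N y z f γ w) ∧
    (∀ γ : List (List V),
      γ ∈ NetFlow.MaxSeqs N y z ↔
        ∃ f : V → V → ℕ, NetFlow.IsMaxFlow N y z f ∧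
          ∃ w : List (List V), NetFlow.IsDecomposition N y z f γ w) := by
  refine ⟨NetFlow.isPathSeq_length_iff_exists_decomposition hyz m, fun γ => ?_⟩
  rw [NetFlow.MaxSeqs, Set.mem_ofPred_eq, NetFlow.maxSeqLen_eq_maxFlowValue hyz,
    NetFlow.isPathSeq_length_iff_exists_decomposition hyz]
  simp only [NetFlow.IsMaxFlow, and_assoc]

/-- (i) the sequences of `m` arc-disjoint paths from `y` to `z` are exactly
those appearing in a decomposition of some flow of value `m`; (ii) the maximum-length
sequences of arc-disjoint paths are exactly those appearing in a decomposition of some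
maximum flow. -/
theorem pathSeq_iff_decomposition {V : Type*} [Fintype V] [DecidableEq V]
    (hV : 2 ≤ Fintype.card V) (N : Network V) (y z : V) (hyz : y ≠ z) (m : ℕ) :
    (∀ γ : List (List V),
      (NetFlow.IsPathSeq N y z γ ∧ γ.length = m) ↔
        ∃ f : V → V → ℕ, NetFlow.IsFlow N y z f ∧ NetFlow.flowValue f y = (m : ℤ) ∧
          ∃ w : List (List V), NetFlow.IsDecomposition N y z f γ w) ∧
    (∀ γ : List (List V),
      γ ∈ NetFlow.MaxSeqs N y z ↔
        ∃ f : V → V → ℕ, NetFlow.IsMaxFlow N y z f ∧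
          ∃ w : List (List V), NetFlow.IsDecomposition N y z f γ w) :=
  pathSeq_iff_decomposition_general N y z hyz m
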